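/- Let U ⊆ ℂ^N be open and let S = {(i,j) : 0 ≤ i ≤ l, 0 ≤ j ≤ s} be a finite index set. Fix an integer k with 1 ≤ k ≤ l, a multi-index J ∈ ℕ^k with d := J_1 + … + J_k ≥ 1, and a pair (i₀,j₀) ∈ S with i₀ ≥ 1. Given a family a = (a_{m,n}) of holomorphic functions U → ℂ indexed by m ∈ ℕ^S and n ∈ ℤ, extend a by zero to indices in ℤ^S having a negative entry, and define for m ∈ ℕ^S, n ∈ ℤ: ã_{m,n} = Σ_{l'≥0} (1/l'!) · ((m_{(0,j₀)} + l')! / m_{(0,j₀)}!) · (Π_{i'=1}^k (m_{(i',0)})^{J_{i'}})^{l'} · a_{m + l'·e_{(0,j₀)} − l'·e_{(i₀,j₀)}, n − d·l'}, where e_{(i,j)} denotes the standard basis vector of ℤ^S. Then: (1) the family (m,n) ↦ m_{(i',0)} · a_{m, n−1} satisfies condition (O^{y,z,z⁻¹}) whenever a does, for each 1 ≤ i' ≤ k; and (2) if a satisfies condition (O^{y,z,z⁻¹}), then for every (m,n) the defining sum of ã_{m,n} has only finitely many nonzero terms, and the family ã = (ã_{m,n}) again satisfies condition (O^{y,z,z⁻¹}).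 -/

import Mathlib

/-!
Write `F(n)` for `n!` (`n ≥ 0`) resp. `1/(-n)!` (`n < 0`) and `μ = |m|`. Both operations lower `n`
by some `q` and multiply the coefficient by a factor of size at most `A^μ · μ^q` (for `z ∂/∂t_{i'}`,
`q = 1` and the factor is `m_{(i',0)} ≤ μ`; for `ã`, `q = d l'` and the factor is a binomial
coefficient `≤ 4^μ` times `(∏ m_{(i',0)}^{J_{i'}})^{l'} ≤ μ^{d l'}`), while `|m|` is unchanged.
The estimate `μ^q F(n - q) ≤ e^{2μ} F(n)`, which follows from `x^q ≤ e^x q!` and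
`q! r! ≤ (q + r)!`, absorbs that factor into the geometric constant `C`, at the price of
`C ↦ const · C^{d+1}` since `|n - q| ≤ |n| + q`. The sum defining `ã_{m,n}` stops at
`l' = m_{(i₀,j₀)}`, so it has at most `2^μ` terms, and lowering `n` preserves the vanishing
condition.
-/

/-- Condition `(O^{y,z,z⁻¹})` on a family of functions `a_{m,n} : U → ℂ`
(`m ∈ ℕ^S` with `S` finite, `n ∈ ℤ`): there exist a continuous `C : U → [1, ∞)` and a constant
`C' ≥ 1` such that (1) `a_{m,n} = 0` whenever `n < −C'(|m| + 1)`, and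
(2) `|a_{m,n}(λ)| ≤ C(λ)^{|m|+|n|+1} · n!` if `n ≥ 0`, and
    `|a_{m,n}(λ)| ≤ C(λ)^{|m|+|n|+1} / (−n)!` if `n < 0`, where `|m| = ∑_s m_s`. -/
def CondOyzzinv {N : ℕ} {S : Type*} [Fintype S] (U : Set (Fin N → ℂ))
    (a : (S → ℕ) → ℤ → (Fin N → ℂ) → ℂ) : Prop :=
  ∃ (C : (Fin N → ℂ) → ℝ) (C' : ℝ), ContinuousOn C U ∧ (∀ x ∈ U, 1 ≤ C x) ∧ 1 ≤ C' ∧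
    (∀ (m : S → ℕ) (n : ℤ), (n : ℝ) < -C' * ((∑ s, m s : ℕ) + 1 : ℝ) → ∀ x ∈ U, a m n x = 0) ∧
    (∀ (m : S → ℕ) (n : ℤ), ∀ x ∈ U, ‖a m n x‖ ≤
      C x ^ ((∑ s, m s) + n.natAbs + 1) *
        (if 0 ≤ n then ((n.toNat).factorial : ℝ) else (((-n).toNat).factorial : ℝ)⁻¹))

/-- The `l'`-th term of the coefficientwise action of the operator
`exp (σ_{i₀,j₀} · ∂/∂τ_{j₀} · T(z ∂/∂t₁, …, z ∂/∂t_k))` (with `T` the monomial with exponent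
vector `J`) on a family `a`, with `a` extended by zero to indices in `ℤ^S` having a negative
entry (the guard `l' ≤ m (i₀, j₀)`): the term is
`(1/l'!) · ((m_{(0,j₀)}+l')!/m_{(0,j₀)}!) · (∏_{i'} m_{(i',0)}^{J_{i'}})^{l'} ·
 a_{m + l'·e_{(0,j₀)} − l'·e_{(i₀,j₀)}, n − d·l'}` where `d = ∑ J`. -/
noncomputable def DeltaTerm {N l s : ℕ} (k : ℕ) (hkl : k ≤ l) (J : Fin k → ℕ)
    (i₀ : Fin (l + 1)) (j₀ : Fin (s + 1))
    (a : (Fin (l + 1) × Fin (s + 1) → ℕ) → ℤ → (Fin N → ℂ) → ℂ)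
    (m : Fin (l + 1) × Fin (s + 1) → ℕ) (n : ℤ) (l' : ℕ) (x : Fin N → ℂ) : ℂ :=
  if l' ≤ m (i₀, j₀) then
    (1 / (Nat.factorial l' : ℂ)) *
      ((Nat.factorial (m ((0 : Fin (l + 1)), j₀) + l') : ℂ) /
        (Nat.factorial (m ((0 : Fin (l + 1)), j₀)) : ℂ)) *
      ((∏ i' : Fin k,
          (m (⟨i'.1 + 1, Nat.succ_lt_succ (Nat.lt_of_lt_of_le i'.2 hkl)⟩,
              (0 : Fin (s + 1))) : ℂ) ^ J i') ^ l') *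
      a (fun p => m p + (if p = ((0 : Fin (l + 1)), j₀) then l' else 0) -
          (if p = (i₀, j₀) then l' else 0))
        (n - ((∑ i, J i) * l' : ℕ)) x
  else 0

open Finset Real
open scoped Nat

noncomputable def facWeight (n : ℤ) : ℝ :=
  if 0 ≤ n then ((n.toNat)! : ℝ) else (((-n).toNat)! : ℝ)⁻¹

lemma facWeight_nonneg (n : ℤ) : 0 ≤ facWeight n := by
  unfold facWeight; split_ifs <;> positivity

lemma facWeight_natCast (r : ℕ) : facWeight r = r ! := by
  simp [facWeight]

lemma facWeight_neg_natCast (r : ℕ) : facWeight (-r) = (r ! : ℝ)⁻¹ := by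
  rcases r with _ | r
  · simp [facWeight]
  · simp [facWeight]
    omega

lemma pow_le_exp_mul_factorial {x : ℝ} (hx : 0 ≤ x) (n : ℕ) : x ^ n ≤ exp x * n ! :=
  (div_le_iff₀ (by positivity)).1 (pow_div_factorial_le_exp _ hx n)

lemma pow_mul_factorial_le {x : ℝ} (hx : 0 ≤ x) (q r : ℕ) :
    x ^ q * r ! ≤ exp x * (q + r)! := by
  have hfac : (q ! * r ! : ℝ) ≤ (q + r)! := by
    exact_mod_cast Nat.le_of_dvd (Nat.factorial_pos _)
      (Nat.factorial_mul_factorial_dvd_factorial_add q r)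
  calc x ^ q * r ! ≤ exp x * q ! * r ! := by gcongr; exact pow_le_exp_mul_factorial hx q
    _ = exp x * (q ! * r !) := by ring
    _ ≤ exp x * (q + r)! := by gcongr

lemma pow_mul_facWeight_sub_le {x : ℝ} (hx : 0 ≤ x) (q : ℕ) (n : ℤ) :
    x ^ q * facWeight (n - q) ≤ exp x ^ 2 * facWeight n := by
  have hexp : exp x ≤ exp x ^ 2 := by nlinarith [one_le_exp hx]
  rcases le_or_gt (q : ℤ) n with hqn | hnq
  · obtain ⟨r, rfl⟩ : ∃ r : ℕ, n = (q + r : ℕ) := ⟨(n - q).toNat, by omega⟩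
    rw [show ((q + r : ℕ) : ℤ) - q = r by push_cast; ring, facWeight_natCast, facWeight_natCast]
    exact (pow_mul_factorial_le hx q r).trans (by gcongr)
  rcases le_or_gt 0 n with hn | hn
  · obtain ⟨p, r, rfl, rfl⟩ : ∃ p r : ℕ, n = p ∧ q = p + r :=
      ⟨n.toNat, q - n.toNat, by omega, by omega⟩
    rw [show (p : ℤ) - (p + r : ℕ) = -r by push_cast; ring, facWeight_neg_natCast,
      facWeight_natCast, pow_add]
    calc x ^ p * x ^ r * (r ! : ℝ)⁻¹ ≤ (exp x * p !) * (exp x * r !) * (r ! : ℝ)⁻¹ := by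
          gcongr <;> exact pow_le_exp_mul_factorial hx _
      _ = exp x ^ 2 * p ! := by field_simp
  · obtain ⟨p, rfl⟩ : ∃ p : ℕ, n = -p := ⟨(-n).toNat, by omega⟩
    rw [show -(p : ℤ) - q = -(q + p : ℕ) by push_cast; ring, facWeight_neg_natCast,
      facWeight_neg_natCast, ← div_eq_mul_inv, ← div_eq_mul_inv,
      div_le_div_iff₀ (by positivity) (by positivity)]
    exact (pow_mul_factorial_le hx q p).trans (by gcongr)

lemma mul_le_of_le_facWeight_sub {A C c z : ℝ} {μ q D : ℕ} {n : ℤ} (hA : 1 ≤ A) (hC : 1 ≤ C)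
    (hc0 : 0 ≤ c) (hc : c ≤ A ^ μ * (μ : ℝ) ^ q) (hq : q ≤ D * (μ + n.natAbs + 1))
    (hz : z ≤ C ^ (μ + (n - q).natAbs + 1) * facWeight (n - q)) :
    c * z ≤ (A * exp 2 * C ^ (D + 1)) ^ (μ + n.natAbs + 1) * facWeight n := by
  set E := μ + n.natAbs + 1
  have hCpow : C ^ (μ + (n - q).natAbs + 1) ≤ (C ^ (D + 1)) ^ E := by
    rw [← pow_mul]
    refine pow_le_pow_right₀ hC ?_
    have := Int.natAbs_sub_le n q
    rw [Int.natAbs_natCast] at this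
    have : (D + 1) * E = D * E + E := by ring
    omega
  have hshift : (μ : ℝ) ^ q * facWeight (n - q) ≤ exp 2 ^ μ * facWeight n := by
    have hexp : exp (μ : ℝ) ^ 2 = exp 2 ^ μ := by rw [← exp_nat_mul, ← exp_nat_mul]; ring_nf
    exact hexp ▸ pow_mul_facWeight_sub_le μ.cast_nonneg q n
  have hC0 : 0 ≤ C := zero_le_one.trans hC
  calc c * z ≤ (A ^ μ * μ ^ q) * ((C ^ (D + 1)) ^ E * facWeight (n - q)) := by
        refine (mul_le_mul_of_nonneg_left (hz.trans ?_) hc0).trans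
          (mul_le_mul_of_nonneg_right hc (by have := facWeight_nonneg (n - q); positivity))
        gcongr
        exact facWeight_nonneg _
    _ = A ^ μ * (C ^ (D + 1)) ^ E * (μ ^ q * facWeight (n - q)) := by ring
    _ ≤ A ^ μ * (C ^ (D + 1)) ^ E * (exp 2 ^ μ * facWeight n) := by gcongr
    _ = (A * exp 2) ^ μ * (C ^ (D + 1)) ^ E * facWeight n := by rw [mul_pow]; ring
    _ ≤ (A * exp 2) ^ E * (C ^ (D + 1)) ^ E * facWeight n := by
        gcongr
        · exact facWeight_nonneg n
        · nlinarith [one_le_exp (zero_le_two (α := ℝ))]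
        · omega
    _ = (A * exp 2 * C ^ (D + 1)) ^ E * facWeight n := by rw [mul_pow (A * exp 2)]

lemma norm_finsum_le_of_eq_zero_of_lt {f : ℕ → ℂ} {L : ℕ} {B : ℝ} (hf : ∀ t, L < t → f t = 0)
    (hB : ∀ t, ‖f t‖ ≤ B) : ‖∑ᶠ t, f t‖ ≤ (L + 1) * B := by
  have hsupp : Function.support f ⊆ (range (L + 1) : Set ℕ) := fun t ht => by
    simp only [coe_range, Set.mem_Iio]
    by_contra h
    exact ht (hf t (by omega))
  rw [finsum_eq_sum_of_support_subset f hsupp]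
  calc ‖∑ t ∈ range (L + 1), f t‖ ≤ ∑ t ∈ range (L + 1), ‖f t‖ := norm_sum_le _ _
    _ ≤ ∑ _t ∈ range (L + 1), B := sum_le_sum fun t _ => hB t
    _ = (L + 1) * B := by simp

lemma sum_add_ite_sub_ite {S : Type*} [Fintype S] [DecidableEq S] (m : S → ℕ) (u v : S) {t : ℕ}
    (ht : t ≤ m v) :
    ∑ p, (m p + (if p = u then t else 0) - (if p = v then t else 0)) = ∑ p, m p := by
  have hle : ∀ p ∈ univ, (if p = v then t else 0) ≤ m p + (if p = u then t else 0) := by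
    intro p _
    split_ifs with hp <;> subst_vars <;> omega
  rw [sum_tsub_distrib _ hle, sum_add_distrib, sum_ite_eq' univ u, sum_ite_eq' univ v]
  simp

section CondOyzzinv

variable {N : ℕ} {S : Type*} [Fintype S] {U : Set (Fin N → ℂ)}
  {a b : (S → ℕ) → ℤ → (Fin N → ℂ) → ℂ}

lemma CondOyzzinv.of_vanish_of_bound (ha : CondOyzzinv U a) (K : ℝ) (hK : 1 ≤ K) (D : ℕ)
    (hvanish : ∀ x ∈ U, ∀ C' : ℝ,
      (∀ (m : S → ℕ) (n : ℤ), (n : ℝ) < -C' * ((∑ s, m s : ℕ) + 1 : ℝ) → a m n x = 0) →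
      ∀ (m : S → ℕ) (n : ℤ), (n : ℝ) < -C' * ((∑ s, m s : ℕ) + 1 : ℝ) → b m n x = 0)
    (hbound : ∀ x ∈ U, ∀ c : ℝ, 1 ≤ c →
      (∀ (m : S → ℕ) (n : ℤ), ‖a m n x‖ ≤ c ^ (∑ s, m s + n.natAbs + 1) * facWeight n) →
      ∀ (m : S → ℕ) (n : ℤ),
        ‖b m n x‖ ≤ (K * c ^ (D + 1)) ^ (∑ s, m s + n.natAbs + 1) * facWeight n) :
    CondOyzzinv U b := by
  obtain ⟨C, C', hCcont, hC1, hC'1, ha_vanish, ha_bound⟩ := ha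
  refine ⟨fun x => K * C x ^ (D + 1), C', continuousOn_const.mul (hCcont.pow _),
    fun x hx => one_le_mul_of_one_le_of_one_le hK (one_le_pow₀ (hC1 x hx)), hC'1,
    fun m n hn x hx => hvanish x hx C' (fun m n hn => ha_vanish m n hn x hx) m n hn,
    fun m n x hx => hbound x hx (C x) (hC1 x hx) (fun m n => ha_bound m n x hx) m n⟩

lemma CondOyzzinv.natCast_apply_mul_sub_one (ha : CondOyzzinv U a) (i : S) :
    CondOyzzinv U (fun m n x => (m i : ℂ) * a m (n - 1) x) := by
  refine ha.of_vanish_of_bound (1 * exp 2) (by simp) 1 ?_ ?_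
  · intro x _ C' hvan m n hn
    rw [hvan m (n - 1) (by rw [Int.cast_sub, Int.cast_one]; linarith), mul_zero]
  · intro x _ c hc hbound m n
    have hmi : (m i : ℝ) ≤ ∑ s, m s := by
      exact_mod_cast single_le_sum (fun s _ => Nat.zero_le (m s)) (mem_univ i)
    rw [norm_mul, Complex.norm_natCast]
    refine mul_le_of_le_facWeight_sub (q := 1) (D := 1) le_rfl hc (Nat.cast_nonneg _)
      (by simpa using hmi) (by omega) ?_
    simpa using hbound m (n - 1)

end CondOyzzinv

section DeltaTerm

variable {N l s k : ℕ} (hkl : k ≤ l) (J : Fin k → ℕ) (i₀ : Fin (l + 1)) (j₀ : Fin (s + 1))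
  (a : (Fin (l + 1) × Fin (s + 1) → ℕ) → ℤ → (Fin N → ℂ) → ℂ)

lemma deltaTerm_of_lt {m : Fin (l + 1) × Fin (s + 1) → ℕ} {l' : ℕ} (h : m (i₀, j₀) < l')
    (n : ℤ) (x : Fin N → ℂ) : DeltaTerm k hkl J i₀ j₀ a m n l' x = 0 :=
  if_neg h.not_ge

lemma setOf_deltaTerm_ne_zero_finite (U : Set (Fin N → ℂ)) (m : Fin (l + 1) × Fin (s + 1) → ℕ)
    (n : ℤ) : {l' : ℕ | ∃ x ∈ U, DeltaTerm k hkl J i₀ j₀ a m n l' x ≠ 0}.Finite :=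
  (Set.finite_Iic (m (i₀, j₀))).subset fun _ ⟨x, _, hne⟩ =>
    not_lt.1 fun h => hne (deltaTerm_of_lt hkl J i₀ j₀ a h n x)

lemma deltaTerm_eq_zero {x : Fin N → ℂ} {C' : ℝ}
    (ha : ∀ (m : Fin (l + 1) × Fin (s + 1) → ℕ) (n : ℤ),
      (n : ℝ) < -C' * ((∑ p, m p : ℕ) + 1 : ℝ) → a m n x = 0)
    {m : Fin (l + 1) × Fin (s + 1) → ℕ} {n : ℤ} (hn : (n : ℝ) < -C' * ((∑ p, m p : ℕ) + 1 : ℝ))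
    (l' : ℕ) : DeltaTerm k hkl J i₀ j₀ a m n l' x = 0 := by
  unfold DeltaTerm
  split_ifs with hl'
  · rw [ha _ _ ?_, mul_zero]
    rw [sum_add_ite_sub_ite m _ _ hl']
    push_cast at hn ⊢
    have : (0 : ℝ) ≤ (∑ i, (J i : ℝ)) * l' := by positivity
    linarith
  · rfl

lemma norm_deltaTerm_le {x : Fin N → ℂ} {c : ℝ} (hc : 1 ≤ c)
    (ha : ∀ (m : Fin (l + 1) × Fin (s + 1) → ℕ) (n : ℤ),
      ‖a m n x‖ ≤ c ^ (∑ p, m p + n.natAbs + 1) * facWeight n)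
    (m : Fin (l + 1) × Fin (s + 1) → ℕ) (n : ℤ) (l' : ℕ) :
    ‖DeltaTerm k hkl J i₀ j₀ a m n l' x‖ ≤
      (4 * exp 2 * c ^ (∑ i, J i + 1)) ^ (∑ p, m p + n.natAbs + 1) * facWeight n := by
  unfold DeltaTerm
  split_ifs with hl'
  · set μ := ∑ p, m p
    have hle : ∀ p, m p ≤ μ := fun p => single_le_sum (fun p _ => Nat.zero_le (m p)) (mem_univ p)
    have hl'μ : l' ≤ μ := hl'.trans (hle _)
    have hchoose : 1 / (l' ! : ℂ) * ((m (0, j₀) + l')! / (m (0, j₀))!) =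
        ((m (0, j₀) + l').choose l' : ℂ) := by
      have := (m (0, j₀))!.cast_ne_zero (R := ℂ) |>.2 (Nat.factorial_ne_zero _)
      have := (l' !).cast_ne_zero (R := ℂ) |>.2 (Nat.factorial_ne_zero _)
      rw [← Nat.add_choose_mul_factorial_mul_factorial]
      push_cast
      field_simp
    rw [hchoose, norm_mul, norm_mul]
    refine mul_le_of_le_facWeight_sub (A := 4) (μ := μ) (q := (∑ i, J i) * l') (D := ∑ i, J i)
      (by norm_num) hc (by positivity) ?_ (Nat.mul_le_mul_left _ (by omega)) ?_
    · rw [pow_mul]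
      refine mul_le_mul ?_ ?_ (norm_nonneg _) (by positivity)
      · rw [Complex.norm_natCast]
        have h2μ : m (0, j₀) + l' ≤ 2 * μ := by have := hle (0, j₀); omega
        calc ((m (0, j₀) + l').choose l' : ℝ) ≤ 2 ^ (2 * μ) := by
              exact_mod_cast (Nat.choose_le_two_pow _ _).trans (Nat.pow_le_pow_right two_pos h2μ)
          _ = 4 ^ μ := by rw [pow_mul]; norm_num
      · simp only [norm_pow, norm_prod, Complex.norm_natCast]
        rw [← prod_pow_eq_pow_sum]
        gcongr
        exact_mod_cast hle _
    · exact (ha _ _).trans_eq (by rw [sum_add_ite_sub_ite m _ _ hl'])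
  · rw [norm_zero]
    have : 0 ≤ c := zero_le_one.trans hc
    have := facWeight_nonneg n
    positivity

lemma CondOyzzinv.finsum_deltaTerm {U : Set (Fin N → ℂ)} (ha : CondOyzzinv U a) :
    CondOyzzinv U (fun m n x => ∑ᶠ l' : ℕ, DeltaTerm k hkl J i₀ j₀ a m n l' x) := by
  refine ha.of_vanish_of_bound (2 * (4 * exp 2)) (by nlinarith [one_le_exp (zero_le_two (α := ℝ))])
    (∑ i, J i) ?_ ?_
  · intro x _ C' hvan m n hn
    simp only [deltaTerm_eq_zero hkl J i₀ j₀ a hvan hn, finsum_zero]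
  · intro x _ c hc hbound m n
    refine (norm_finsum_le_of_eq_zero_of_lt (fun l' h => deltaTerm_of_lt hkl J i₀ j₀ a h n x)
      (norm_deltaTerm_le hkl J i₀ j₀ a hc hbound m n)).trans ?_
    have hcount : (m (i₀, j₀) + 1 : ℝ) ≤ 2 ^ (∑ p, m p + n.natAbs + 1) := by
      have := single_le_sum (fun p _ => Nat.zero_le (m p)) (mem_univ (i₀, j₀))
      have := (∑ p, m p + n.natAbs + 1).lt_two_pow_self
      exact_mod_cast (by omega : m (i₀, j₀) + 1 ≤ 2 ^ (∑ p, m p + n.natAbs + 1))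
    have := facWeight_nonneg n
    have : 0 ≤ c := zero_le_one.trans hc
    calc (m (i₀, j₀) + 1 : ℝ) *
          ((4 * exp 2 * c ^ (∑ i, J i + 1)) ^ (∑ p, m p + n.natAbs + 1) * facWeight n)
        ≤ 2 ^ (∑ p, m p + n.natAbs + 1) *
          ((4 * exp 2 * c ^ (∑ i, J i + 1)) ^ (∑ p, m p + n.natAbs + 1) * facWeight n) := by
          gcongr
      _ = (2 * (4 * exp 2) * c ^ (∑ i, J i + 1)) ^ (∑ p, m p + n.natAbs + 1) * facWeight n := by
          rw [mul_assoc 2 (4 * exp 2), mul_pow (2 : ℝ)]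
          ring

end DeltaTerm

theorem stmt_8_general {N l s : ℕ} (U : Set (Fin N → ℂ))
    (k : ℕ) (hkl : k ≤ l)
    (J : Fin k → ℕ)
    (i₀ : Fin (l + 1)) (j₀ : Fin (s + 1))
    (a : (Fin (l + 1) × Fin (s + 1) → ℕ) → ℤ → (Fin N → ℂ) → ℂ) :
    (∀ i' : Fin k, CondOyzzinv U a →
      CondOyzzinv U (fun m n x =>
        (m (⟨i'.1 + 1, Nat.succ_lt_succ (Nat.lt_of_lt_of_le i'.2 hkl)⟩,
            (0 : Fin (s + 1))) : ℂ) * a m (n - 1) x)) ∧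
    (CondOyzzinv U a →
      (∀ (m : Fin (l + 1) × Fin (s + 1) → ℕ) (n : ℤ),
        Set.Finite {l' : ℕ | ∃ x ∈ U, DeltaTerm k hkl J i₀ j₀ a m n l' x ≠ 0}) ∧
      CondOyzzinv U (fun m n x => ∑ᶠ l' : ℕ, DeltaTerm k hkl J i₀ j₀ a m n l' x)) :=
  ⟨fun _ ha => ha.natCast_apply_mul_sub_one _,
    fun ha => ⟨setOf_deltaTerm_ne_zero_finite hkl J i₀ j₀ a U, ha.finsum_deltaTerm hkl J i₀ j₀ a⟩⟩

/-- With `S = {(i,j) : 0 ≤ i ≤ l, 0 ≤ j ≤ s}`, `1 ≤ k ≤ l`, `J ∈ ℕ^k` with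
`d = ∑ J ≥ 1`, and `(i₀, j₀) ∈ S` with `i₀ ≥ 1`:
(1) if `a` satisfies condition `(O^{y,z,z⁻¹})` then so does the family
`(m, n) ↦ m_{(i',0)} · a_{m, n−1}` for each `1 ≤ i' ≤ k` (the action of `z ∂/∂t_{i'}`); and
(2) if `a` satisfies `(O^{y,z,z⁻¹})` then for every `(m, n)` the defining sum of `ã_{m,n}`
(the coefficientwise action of `exp(σ_{i₀,j₀} ∂/∂τ_{j₀} T(z∂/∂t))`) has only finitely many
nonzero terms and the family `ã` again satisfies `(O^{y,z,z⁻¹})`. -/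
theorem stmt_8 {N l s : ℕ} (U : Set (Fin N → ℂ))
    (k : ℕ) (hk1 : 1 ≤ k) (hkl : k ≤ l)
    (J : Fin k → ℕ) (hJ : 1 ≤ ∑ i, J i)
    (i₀ : Fin (l + 1)) (j₀ : Fin (s + 1)) (hi₀ : 1 ≤ (i₀ : ℕ))
    (a : (Fin (l + 1) × Fin (s + 1) → ℕ) → ℤ → (Fin N → ℂ) → ℂ) :
    (∀ i' : Fin k, CondOyzzinv U a →
      CondOyzzinv U (fun m n x =>
        (m (⟨i'.1 + 1, Nat.succ_lt_succ (Nat.lt_of_lt_of_le i'.2 hkl)⟩,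
            (0 : Fin (s + 1))) : ℂ) * a m (n - 1) x)) ∧
    (CondOyzzinv U a →
      (∀ (m : Fin (l + 1) × Fin (s + 1) → ℕ) (n : ℤ),
        Set.Finite {l' : ℕ | ∃ x ∈ U, DeltaTerm k hkl J i₀ j₀ a m n l' x ≠ 0}) ∧
      CondOyzzinv U (fun m n x => ∑ᶠ l' : ℕ, DeltaTerm k hkl J i₀ j₀ a m n l' x)) :=
  stmt_8_general U k hkl J i₀ j₀ a
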